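/- arXiv:2605.09451 — 6 statements merged into one kernel-verified Lean document; each statement's English description precedes it below -/
import Mathlib

section
/- Let k, n be positive integers greater than 1 and suppose both n and k are even. Then there exist matrices A, B in M_n(ℂ) such that (AB - BA)^k is the identity matrix. (In particular, the diagonal matrix C = diag(1, -1, 1, -1, ..., 1, -1) has trace zero and satisfies C^k = Id_n.) -/
/-!
Let `P` be the permutation matrix of the involution `2j ↔ 2j + 1` of `Fin n` and `E` the
diagonal projection onto the even coordinates. Since `P² = 1`,
`[E P, P E] = E² - P E² P = E - (1 - E) = diag(1, -1, …, 1, -1)`,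
and this diagonal matrix has trace `0` and `k`-th power `1` because `n` and `k` are even.
-/

open Matrix

section Commutator

variable {ι R : Type*} [Fintype ι] [DecidableEq ι] [CommRing R]

theorem Matrix.permMatrix_mul_diagonal_mul_permMatrix_inv (σ : Equiv.Perm ι) (v : ι → R) :
    σ.permMatrix R * diagonal v * σ⁻¹.permMatrix R = diagonal (v ∘ σ) := by
  rw [PEquiv.toMatrix_toPEquiv_mul, PEquiv.mul_toMatrix_toPEquiv]
  exact submatrix_diagonal_equiv v σ

theorem Matrix.exists_commutator_eq_diagonal_sq_sub_sq (σ : Equiv.Perm ι)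
    (hσ : Function.Involutive σ) (v : ι → R) :
    ∃ A B : Matrix ι ι R, A * B - B * A = diagonal fun i => v i ^ 2 - v (σ i) ^ 2 := by
  have hσσ : σ * σ = 1 := Equiv.ext hσ
  have hinv : σ⁻¹ = σ := inv_eq_of_mul_eq_one_right hσσ
  set P := σ.permMatrix R
  have hPP : P * P = 1 := by rw [← permMatrix_mul, hσσ, permMatrix_one]
  have hconj : P * diagonal (v ^ 2) * P = diagonal ((v ^ 2) ∘ σ) := by
    simpa only [hinv] using permMatrix_mul_diagonal_mul_permMatrix_inv σ (v ^ 2)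
  refine ⟨diagonal v * P, P * diagonal v, ?_⟩
  calc diagonal v * P * (P * diagonal v) - P * diagonal v * (diagonal v * P)
      = diagonal v * (P * P) * diagonal v - P * (diagonal v * diagonal v) * P := by
        simp only [Matrix.mul_assoc]
    _ = diagonal (v ^ 2) - diagonal ((v ^ 2) ∘ σ) := by
        rw [hPP, Matrix.mul_one, diagonal_mul_diagonal, ← hconj, sq]; rfl
    _ = _ := by rw [diagonal_sub]; rfl

end Commutator

def Fin.swapAdjacent {n : ℕ} (hn : n % 2 = 0) (i : Fin n) : Fin n :=
  ⟨if (i : ℕ) % 2 = 0 then i + 1 else i - 1, by split_ifs <;> omega⟩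

theorem Fin.swapAdjacent_involutive {n : ℕ} (hn : n % 2 = 0) :
    Function.Involutive (Fin.swapAdjacent hn) := by
  intro i
  ext
  simp only [Fin.swapAdjacent]
  split_ifs <;> omega

theorem Fin.swapAdjacent_mod_two_eq_zero_iff {n : ℕ} (hn : n % 2 = 0) (i : Fin n) :
    (Fin.swapAdjacent hn i : ℕ) % 2 = 0 ↔ ¬(i : ℕ) % 2 = 0 := by
  simp only [Fin.swapAdjacent]
  split_ifs <;> omega

theorem Matrix.exists_commutator_eq_diagonal_neg_one_pow {R : Type*} [CommRing R] {n : ℕ}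
    (hn : Even n) :
    ∃ A B : Matrix (Fin n) (Fin n) R,
      A * B - B * A = diagonal fun i : Fin n => (-1 : R) ^ (i : ℕ) := by
  have hn2 : n % 2 = 0 := Nat.even_iff.mp hn
  let σ := (Fin.swapAdjacent_involutive hn2).toPerm
  obtain ⟨A, B, hAB⟩ := exists_commutator_eq_diagonal_sq_sub_sq σ
    (Fin.swapAdjacent_involutive hn2) fun i : Fin n => if (i : ℕ) % 2 = 0 then (1 : R) else 0
  refine ⟨A, B, hAB.trans (congrArg diagonal (funext fun i => ?_))⟩
  rcases Nat.mod_two_eq_zero_or_one i with h | h <;>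
    simp [σ, Fin.swapAdjacent_mod_two_eq_zero_iff, h, neg_one_pow_eq_pow_mod_two (i : ℕ)]

theorem Matrix.trace_diagonal_neg_one_pow {R : Type*} [Ring R] {n : ℕ} (hn : Even n) :
    trace (diagonal fun i : Fin n => (-1 : R) ^ (i : ℕ)) = 0 := by
  rw [trace_diagonal, Fin.sum_univ_eq_sum_range, neg_one_geom_sum, if_pos hn]

theorem Matrix.diagonal_neg_one_pow_pow_of_even {ι R : Type*} [Fintype ι] [DecidableEq ι]
    [Ring R] (e : ι → ℕ) {k : ℕ} (hk : Even k) :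
    (diagonal fun i => (-1 : R) ^ e i) ^ k = 1 := by
  rw [diagonal_pow, ← diagonal_one]
  congr 1
  funext i
  rw [Pi.pow_apply, ← pow_mul, mul_comm, pow_mul, hk.neg_one_pow, one_pow]

theorem stmt_0_general (k n : ℕ) (hke : Even k) (hne : Even n) :
    (∃ A B : Matrix (Fin n) (Fin n) ℂ, (A * B - B * A) ^ k = 1) ∧
    (Matrix.trace (Matrix.diagonal (fun i : Fin n => ((-1 : ℂ)) ^ (i : ℕ))) = 0 ∧
      (Matrix.diagonal (fun i : Fin n => ((-1 : ℂ)) ^ (i : ℕ))) ^ k = 1) := by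
  have hpow := diagonal_neg_one_pow_pow_of_even (R := ℂ) (fun i : Fin n => (i : ℕ)) hke
  obtain ⟨A, B, hAB⟩ := exists_commutator_eq_diagonal_neg_one_pow (R := ℂ) hne
  exact ⟨⟨A, B, hAB ▸ hpow⟩, trace_diagonal_neg_one_pow hne, hpow⟩

theorem stmt_0 (k n : ℕ) (hk : 1 < k) (hn : 1 < n) (hke : Even k) (hne : Even n) :
    (∃ A B : Matrix (Fin n) (Fin n) ℂ, (A * B - B * A) ^ k = 1) ∧
    (Matrix.trace (Matrix.diagonal (fun i : Fin n => ((-1 : ℂ)) ^ (i : ℕ))) = 0 ∧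
      (Matrix.diagonal (fun i : Fin n => ((-1 : ℂ)) ^ (i : ℕ))) ^ k = 1) :=
  stmt_0_general k n hke hne
end

section
/- Let k = p^α be a prime power and n a positive integer greater than 1. There exist matrices A, B in M_n(ℂ) with (AB - BA)^k = Id_n if and only if p divides n. -/
/-!
If `(AB - BA)^k = 1` with `k = p^α`, the eigenvalues of the traceless matrix `AB - BA` are `n`
`p^α`-th roots of unity summing to zero. Writing them as powers `ζ^{e_i}` of a primitive root,
`ζ` is a root of `∑ X^{e_i} ∈ ℤ[X]`, so the minimal polynomial `Φ_{p^α}` of `ζ` divides it;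
evaluating at `1`, where `Φ_{p^α}(1) = p`, gives `p ∣ n`.

Conversely, if `n = p m` then translation by `m` on `ℤ/n` is a fixed-point-free permutation of
order `p`, whose permutation matrix `C` has zero diagonal and `C^k = 1`. Every zero-diagonal
matrix is a commutator `[D, B]` with `D` diagonal with distinct entries, since
`[D, B]_{ij} = (d_i - d_j) B_{ij}`.
-/

open Polynomial Matrix

namespace IsPrimitiveRoot

variable {K : Type*} [Field K] [CharZero K] {p α : ℕ} {ζ : K}

theorem prime_dvd_card_of_sum_pow_eq_zero (hζ : IsPrimitiveRoot ζ (p ^ α)) (hp : p.Prime)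
    (hα : 0 < α) (t : Multiset ℕ) (ht : (t.map (ζ ^ ·)).sum = 0) : p ∣ Multiset.card t := by
  have : Fact p.Prime := ⟨hp⟩
  set f : ℤ[X] := (t.map (X ^ ·)).sum
  have hf : aeval ζ f = 0 := by simpa [f, map_multiset_sum, Multiset.map_map] using ht
  obtain ⟨q, hq⟩ : cyclotomic (p ^ α) ℤ ∣ f := by
    rw [cyclotomic_eq_minpoly hζ (pow_pos hp.pos α)]
    exact minpoly.isIntegrallyClosed_dvd (hζ.isIntegral (pow_pos hp.pos α)) hf
  have hf1 : f.eval 1 = Multiset.card t := by simp [f, eval_multisetSum]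
  obtain ⟨β, rfl⟩ := Nat.exists_eq_add_of_lt hα
  have : (Multiset.card t : ℤ) = p * q.eval 1 := by
    rw [← hf1, hq, eval_mul, zero_add, eval_one_cyclotomic_prime_pow]
  exact_mod_cast Dvd.intro _ this.symm

theorem prime_dvd_card_of_sum_eq_zero_of_pow_eq_one (hζ : IsPrimitiveRoot ζ (p ^ α))
    (hp : p.Prime) (hα : 0 < α) (s : Multiset K) (hs : ∀ x ∈ s, x ^ p ^ α = 1)
    (h0 : s.sum = 0) : p ∣ Multiset.card s := by
  have : NeZero (p ^ α) := ⟨pow_ne_zero _ hp.ne_zero⟩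
  have : CanLift K ℕ (ζ ^ ·) (· ^ p ^ α = 1) :=
    ⟨fun x hx => (hζ.eq_pow_of_pow_eq_one hx).imp fun _ h => h.2⟩
  lift s to Multiset ℕ using hs
  simpa using hζ.prime_dvd_card_of_sum_pow_eq_zero hp hα s h0

end IsPrimitiveRoot

namespace Matrix

section Field

variable {K ι : Type*} [Field K] [Fintype ι] [DecidableEq ι]

theorem pow_eq_one_of_isRoot_charpoly {M : Matrix ι ι K} {k : ℕ} (hM : M ^ k = 1) {x : K}
    (hx : M.charpoly.IsRoot x) : x ^ k = 1 := by
  have : Nonempty ι :=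
    (isEmpty_or_nonempty ι).resolve_left fun _ => by simp [charpoly_isEmpty] at hx
  simpa [hM, spectrum.one_eq] using
    spectrum.pow_mem_pow M k (mem_spectrum_iff_isRoot_charpoly.mpr hx)

theorem prime_dvd_card_of_pow_eq_one_of_trace_eq_zero [IsAlgClosed K] [CharZero K] {p α : ℕ}
    (hp : p.Prime) (hα : 0 < α) {M : Matrix ι ι K} (hM : M ^ p ^ α = 1) (htr : M.trace = 0) :
    p ∣ Fintype.card ι := by
  have : NeZero ((p ^ α : ℕ) : K) := ⟨by exact_mod_cast pow_ne_zero _ hp.ne_zero⟩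
  obtain ⟨ζ, hζ⟩ := HasEnoughRootsOfUnity.exists_primitiveRoot K (p ^ α)
  have hcard : Multiset.card M.charpoly.roots = Fintype.card ι := by
    rw [← (IsAlgClosed.splits M.charpoly).natDegree_eq_card_roots, charpoly_natDegree_eq_dim]
  rw [← hcard]
  refine hζ.prime_dvd_card_of_sum_eq_zero_of_pow_eq_one hp hα _
    (fun x hx => pow_eq_one_of_isRoot_charpoly hM (isRoot_of_mem_roots hx)) ?_
  rwa [← trace_eq_sum_roots_charpoly]

theorem exists_diagonal_commutator_eq {d : ι → K} (hd : Function.Injective d)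
    {C : Matrix ι ι K} (hC : ∀ i, C i i = 0) : ∃ B, diagonal d * B - B * diagonal d = C := by
  refine ⟨of fun i j => C i j / (d i - d j), ?_⟩
  ext i j
  rcases eq_or_ne i j with rfl | hij
  · simp [hC]
  · have : d i - d j ≠ 0 := sub_ne_zero.mpr (hd.ne hij)
    simp only [sub_apply, diagonal_mul, mul_diagonal, of_apply]
    field_simp

theorem exists_commutator_eq_of_diag_eq_zero [CharZero K] {C : Matrix ι ι K}
    (hC : ∀ i, C i i = 0) : ∃ A B, A * B - B * A = C :=
  ⟨_, exists_diagonal_commutator_eq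
    ((Nat.cast_injective.comp Fin.val_injective).comp (Fintype.equivFin ι).injective) hC⟩

end Field

section Perm

variable {R ι : Type*} [DecidableEq ι]

theorem permMatrix_pow [Fintype ι] [Semiring R] (σ : Equiv.Perm ι) (k : ℕ) :
    (σ ^ k).permMatrix R = σ.permMatrix R ^ k := by
  induction k with
  | zero => simp
  | succ k ih => rw [pow_succ', permMatrix_mul, ih, pow_succ]

theorem permMatrix_apply_self_of_ne [Zero R] [One R] {σ : Equiv.Perm ι} {i : ι}
    (hi : σ i ≠ i) : σ.permMatrix R i i = 0 := by
  simp [Equiv.Perm.permMatrix, PEquiv.toMatrix_apply, hi]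

end Perm

end Matrix

open Fin.CommRing in
theorem Fin.exists_perm_pow_eq_one_forall_apply_ne {n p : ℕ} [NeZero n] (hp : 1 < p)
    (hpn : p ∣ n) : ∃ σ : Equiv.Perm (Fin n), σ ^ p = 1 ∧ ∀ i, σ i ≠ i := by
  obtain ⟨m, hm⟩ := hpn
  have hm0 : 0 < m := Nat.pos_of_ne_zero fun h => NeZero.ne n (by simp [hm, h])
  refine ⟨Equiv.addRight (m : Fin n), ?_, fun i hi => ?_⟩
  · rw [Equiv.nsmul_addRight, nsmul_eq_mul, ← Nat.cast_mul, ← hm, Fin.natCast_self,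
      Equiv.addRight_zero]
  · have : n ≤ m := Nat.le_of_dvd hm0 (Fin.natCast_eq_zero.mp (add_eq_left.mp hi))
    nlinarith

theorem stmt_3 (p α : ℕ) (hp : Nat.Prime p) (hα : 0 < α) (k : ℕ) (hk : k = p ^ α)
    (n : ℕ) (hn : 1 < n) :
    (∃ A B : Matrix (Fin n) (Fin n) ℂ, (A * B - B * A) ^ k = 1) ↔ p ∣ n := by
  subst hk
  constructor
  · rintro ⟨A, B, hAB⟩
    simpa using prime_dvd_card_of_pow_eq_one_of_trace_eq_zero hp hα hAB
      (by rw [trace_sub, trace_mul_comm, sub_self])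
  · intro hpn
    have : NeZero n := ⟨by omega⟩
    obtain ⟨σ, hσp, hσ⟩ := Fin.exists_perm_pow_eq_one_forall_apply_ne hp.one_lt hpn
    obtain ⟨A, B, hAB⟩ := exists_commutator_eq_of_diag_eq_zero (K := ℂ)
      fun i => permMatrix_apply_self_of_ne (hσ i)
    obtain ⟨β, rfl⟩ := Nat.exists_eq_add_of_lt hα
    refine ⟨A, B, ?_⟩
    rw [hAB, ← permMatrix_pow, zero_add, pow_succ', pow_mul, hσp, one_pow,
      permMatrix_one]
end

section
/- Let S be a unital ring and n ≥ 2. Let P ∈ M_n(S) be the cyclic permutation matrix with P_{ij} = 1 if i ≡ j+1 (mod n) and 0 otherwise, and let D = diag(0, 1, 2, ..., n-1) ∈ M_n(S). Then (DP - PD)^n = (1 - n)·Id_n. -/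
/-!
`D * P - P * D` has entry `i - j` wherever `P` has a `1`, i.e. at `i = j + 1 (mod n)`: this is `1`
except at the wrap-around entry, where it is `0 - (n - 1) = 1 - n`. So the commutator is a
weighted cyclic shift `e_j ↦ c_j e_{j+1}`, whose `n`-th power walks once around the cycle and is
`(∏ c_j) • 1 = (1 - n) • 1`. The weights are integers, so the power is computed over `ℤ`, where
they commute, and then mapped into `S`.
-/

open Finset

theorem val_finRotate {n : ℕ} (j : Fin (n + 1)) : (finRotate (n + 1) j : ℕ) = (j + 1) % (n + 1) := by
  simp [Fin.val_add]

namespace Matrix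

variable {ι R : Type*} [DecidableEq ι]

def weightedShift [Zero R] (f : ι → ι) (c : ι → R) : Matrix ι ι R :=
  of fun i j => if f j = i then c j else 0

variable [Fintype ι] [CommSemiring R]

theorem weightedShift_pow_apply (f : ι → ι) (c : ι → R) (k : ℕ) (i j : ι) :
    (weightedShift f c ^ k) i j = if f^[k] j = i then ∏ m ∈ range k, c (f^[m] j) else 0 := by
  induction k generalizing i with
  | zero =>
    simp only [pow_zero, one_apply, Function.iterate_zero_apply, prod_range_zero]
    exact if_congr eq_comm rfl rfl
  | succ k ih =>
    rw [pow_succ', mul_apply, sum_eq_single (f^[k] j) (fun l _ hl => by simp [ih, Ne.symm hl])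
      (by simp), ih, if_pos rfl, Function.iterate_succ_apply', prod_range_succ]
    simp only [weightedShift, of_apply]
    split_ifs <;> simp [mul_comm]

theorem weightedShift_finRotate_pow_card {n : ℕ} (c : Fin (n + 1) → R) :
    weightedShift (finRotate (n + 1)) c ^ (n + 1) = (∏ i, c i) • 1 := by
  ext i j
  have horbit (k : Fin (n + 1)) : (finRotate (n + 1))^[k] j = j + k := by
    rw [← finCycle_eq_finRotate_iterate, finCycle_apply]
  have hperiod : (finRotate (n + 1))^[n + 1] j = j := by
    have hlast := horbit (Fin.last n)
    rw [Fin.val_last] at hlast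
    rw [Function.iterate_succ_apply', hlast, finRotate_apply, add_assoc, Fin.last_add_one,
      add_zero]
  have hprod : ∏ m ∈ range (n + 1), c ((finRotate (n + 1))^[m] j) = ∏ i, c i := by
    rw [← Fin.prod_univ_eq_prod_range, prod_congr rfl fun k _ => congrArg c (horbit k)]
    exact Fintype.prod_equiv (Equiv.addLeft j) _ _ fun _ => rfl
  rw [weightedShift_pow_apply, hperiod, hprod, smul_apply, one_apply, smul_eq_mul, mul_ite,
    mul_one, mul_zero]
  exact if_congr eq_comm rfl rfl

end Matrix

theorem stmt_5_general (S : Type*) [Ring S] (n : ℕ)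
    (P D : Matrix (Fin n) (Fin n) S)
    (hP : ∀ i j, P i j = if ((j : ℕ) + 1) % n = (i : ℕ) then 1 else 0)
    (hD : ∀ i j, D i j = if i = j then ((i : ℕ) : S) else 0) :
    (D * P - P * D) ^ n = ((1 : S) - (n : S)) • (1 : Matrix (Fin n) (Fin n) S) := by
  rcases n with _ | m
  · exact Subsingleton.elim _ _
  set c : Fin (m + 1) → ℤ := fun j => if j = Fin.last m then -m else 1
  have hcomm : D * P - P * D =
      (Int.castRingHom S).mapMatrix (Matrix.weightedShift (finRotate _) c) := by
    have hDdiag : D = Matrix.diagonal fun i : Fin (m + 1) => ((i : ℕ) : S) := by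
      ext i j; rw [hD, Matrix.diagonal_apply]
    have hrot (i j : Fin (m + 1)) : ((j : ℕ) + 1) % (m + 1) = i ↔ finRotate (m + 1) j = i := by
      rw [Fin.ext_iff, val_finRotate]
    ext i j
    rw [Matrix.sub_apply, hDdiag, Matrix.diagonal_mul, Matrix.mul_diagonal, hP]
    simp only [hrot, RingHom.mapMatrix_apply, Matrix.map_apply, Matrix.weightedShift,
      Matrix.of_apply, c]
    split_ifs with hij hj
    · subst hij hj; simp
    · subst hij; rw [coe_finRotate_of_ne_last hj]; simp
    · simp
  have hprod : ∏ i, c i = 1 - (m + 1 : ℕ) := by simp [c]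
  rw [hcomm, ← map_pow, Matrix.weightedShift_finRotate_pow_card, hprod]
  ext i j
  simp only [RingHom.mapMatrix_apply, Matrix.map_apply, Matrix.smul_apply, Matrix.one_apply]
  split_ifs <;> simp

theorem stmt_5 (S : Type*) [Ring S] (n : ℕ) (hn : 2 ≤ n)
    (P D : Matrix (Fin n) (Fin n) S)
    (hP : ∀ i j, P i j = if ((j : ℕ) + 1) % n = (i : ℕ) then 1 else 0)
    (hD : ∀ i j, D i j = if i = j then ((i : ℕ) : S) else 0) :
    (D * P - P * D) ^ n = ((1 : S) - (n : S)) • (1 : Matrix (Fin n) (Fin n) S) :=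
  stmt_5_general S n P D hP hD
end

section
/- Let S be a unital ring. If there exists a central unit u of S such that 1 - u is also a central unit, then there exist matrices A, B ∈ M_3(S) with (AB - BA)^3 = Id_3. -/
/-!
Take `A = diag(1, 1 - u, 0)`. Commuting a diagonal matrix `diag d` with `B` multiplies the
entry `B i j` by `d i` on the left and by `d j` on the right, so with
`B = !![0, u⁻¹, 0; 0, 0, (1 - u)⁻¹; -1, 0, 0]` the commutator `AB - BA` is the permutation
matrix of the 3-cycle `0 ↦ 1 ↦ 2 ↦ 0`, whose cube is the identity.
-/

open Matrix Equiv

lemma Matrix.diagonal_mul_sub_mul_diagonal_apply {n R : Type*} [Fintype n] [DecidableEq n]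
    [Ring R] (d : n → R) (B : Matrix n n R) (i j : n) :
    (diagonal d * B - B * diagonal d) i j = d i * B i j - B i j * d j := by
  simp [diagonal_mul, mul_diagonal]

lemma Matrix.permMatrix_pow_s9 {n R : Type*} [Fintype n] [DecidableEq n] [Semiring R]
    (σ : Perm n) (k : ℕ) : (σ ^ k).permMatrix R = σ.permMatrix R ^ k := by
  induction k with
  | zero => simp
  | succ k ih => rw [pow_succ, permMatrix_mul, ih, pow_succ']

lemma finRotate_three_pow_three : finRotate 3 ^ 3 = 1 := by decide

lemma Matrix.diagonal_commutator_eq_permMatrix_finRotate {S : Type*} [Ring S] {u v w : S}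
    (hvu : v * u = 1) (huw : (1 - u) * w = 1) :
    diagonal ![1, 1 - u, 0] * !![0, v, 0; 0, 0, w; -1, 0, 0]
      - !![0, v, 0; 0, 0, w; -1, 0, 0] * diagonal ![1, 1 - u, 0]
      = (finRotate 3).permMatrix S := by
  ext i j
  rw [diagonal_mul_sub_mul_diagonal_apply]
  fin_cases i <;> fin_cases j <;> simp [mul_sub, hvu, huw]

theorem stmt_9_general (S : Type*) [Ring S] (u : S) (huu : IsUnit u)
    (h1uu : IsUnit (1 - u)) :
    ∃ A B : Matrix (Fin 3) (Fin 3) S, (A * B - B * A) ^ 3 = 1 := by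
  obtain ⟨U, rfl⟩ := huu
  obtain ⟨W, hW⟩ := h1uu
  have hvu : ↑U⁻¹ * (U : S) = 1 := U.inv_mul
  have huw : (1 - U : S) * ↑W⁻¹ = 1 := by rw [← hW, W.mul_inv]
  have hC := diagonal_commutator_eq_permMatrix_finRotate hvu huw
  exact ⟨_, _, by rw [hC, ← permMatrix_pow_s9, finRotate_three_pow_three, permMatrix_one]⟩

theorem stmt_9 (S : Type*) [Ring S] (u : S) (huc : u ∈ Set.center S) (huu : IsUnit u)
    (h1uc : (1 - u) ∈ Set.center S) (h1uu : IsUnit (1 - u)) :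
    ∃ A B : Matrix (Fin 3) (Fin 3) S, (A * B - B * A) ^ 3 = 1 :=
  stmt_9_general S u huu h1uu
end

section
/- Let R be a unital ring with n invertible, ω a central unit with ω^n = 1 and ω^i - ω^j a unit for all 0 ≤ i ≠ j ≤ n-1, and u ∈ R with u^n = 1. Let e_0, ..., e_{n-1} be the spectral idempotents e_k = (1/n) ∑_j ω^{-kj} u^j. If there exists a unit v ∈ R with v u v^{-1} = ω^{-1} u, then v e_k v^{-1} = e_{k+1} for all k (indices modulo n), and consequently the idempotents e_0, ..., e_{n-1} are cyclically equivalent. -/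
/-!
As `ω⁻¹` is central, `e_k = n⁻¹ ∑_{j<n} a_k ^ j` with `a_k = ω^{-k} u`, and `a_k ^ n = 1`.
Any such averaged geometric sum is idempotent, because `a` fixes `∑_{j<n} a ^ j` under
multiplication. Conjugation by `v` sends `a_k` to `a_{k+1}`, hence `e_k` to `e_{k+1}`, and an
idempotent is equivalent to each of its conjugates through `x = e v⁻¹`, `y = v e`.
-/

open Finset

/-- Idempotents `e 0, …, e (n-1)` (indices mod `n`) are cyclically equivalent if for each
`i < n` there are `x ∈ e_i R e_{i+1}` and `y ∈ e_{i+1} R e_i` with `x*y = e_i`,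
`y*x = e_{i+1}`. -/
def CyclicallyEquivalent {R : Type*} [Ring R] (n : ℕ) (e : ℕ → R) : Prop :=
  ∀ i < n, ∃ x y : R,
    (∃ r, x = e i * r * e ((i + 1) % n)) ∧
    (∃ r, y = e ((i + 1) % n) * r * e i) ∧
    x * y = e i ∧ y * x = e ((i + 1) % n)

theorem Set.ringInverse_mem_center {M₀ : Type*} [MonoidWithZero M₀] {a : M₀}
    (ha : a ∈ Set.center M₀) : Ring.inverse a ∈ Set.center M₀ := by
  by_cases h : IsUnit a
  · rw [← h.unit_spec, Ring.inverse_unit]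
    exact Set.units_inv_mem_center (by rwa [h.unit_spec])
  · rw [Ring.inverse_non_unit a h]
    exact Set.zero_mem_center

section GeomSum

variable {R : Type*} [Ring R] {a : R} {n : ℕ}

theorem geom_sum_mul_pow_of_pow_eq_one (ha : a ^ n = 1) (j : ℕ) :
    (∑ i ∈ range n, a ^ i) * a ^ j = ∑ i ∈ range n, a ^ i := by
  have hfix : (∑ i ∈ range n, a ^ i) * a = ∑ i ∈ range n, a ^ i := by
    have h := geom_sum_mul a n
    rwa [ha, sub_self, mul_sub, mul_one, sub_eq_zero] at h
  induction j with
  | zero => rw [pow_zero, mul_one]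
  | succ j ih => rw [pow_succ, ← mul_assoc, ih, hfix]

theorem geom_sum_mul_self_of_pow_eq_one (ha : a ^ n = 1) :
    (∑ i ∈ range n, a ^ i) * ∑ i ∈ range n, a ^ i = n * ∑ i ∈ range n, a ^ i := by
  rw [mul_sum, sum_congr rfl fun j _ => geom_sum_mul_pow_of_pow_eq_one ha j, sum_const,
    card_range, nsmul_eq_mul]

theorem isIdempotentElem_inverse_mul_geom_sum (hn : IsUnit (n : R)) (ha : a ^ n = 1) :
    IsIdempotentElem (Ring.inverse (n : R) * ∑ i ∈ range n, a ^ i) := by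
  have hc := (Set.ringInverse_mem_center (Set.natCast_mem_center R n)).comm
  rw [IsIdempotentElem, (hc _).symm.mul_mul_mul_comm, geom_sum_mul_self_of_pow_eq_one ha,
    mul_assoc, ← mul_assoc _ (n : R), Ring.inverse_mul_cancel _ hn, one_mul]

theorem Units.conj_inverse_mul_geom_sum (v : Rˣ) (a : R) (n : ℕ) :
    v * (Ring.inverse (n : R) * ∑ i ∈ range n, a ^ i) * ↑v⁻¹ =
      Ring.inverse (n : R) * ∑ i ∈ range n, (v * a * ↑v⁻¹) ^ i := by
  have hc := (Set.ringInverse_mem_center (Set.natCast_mem_center R n)).comm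
  simp only [Units.conj_pow, mul_sum, sum_mul]
  refine sum_congr rfl fun i _ => ?_
  rw [← mul_assoc, ← (hc _).eq, mul_assoc, mul_assoc, mul_assoc]

end GeomSum

theorem cyclicallyEquivalent_of_conj_eq {R : Type*} [Ring R] {n : ℕ} {e : ℕ → R} (v : Rˣ)
    (he : ∀ i < n, IsIdempotentElem (e i))
    (hv : ∀ i < n, v * e i * ↑v⁻¹ = e ((i + 1) % n)) :
    CyclicallyEquivalent n e := by
  intro i hi
  rw [← hv i hi]
  have hei := (he i hi).eq
  refine ⟨e i * ↑v⁻¹, v * e i, ⟨↑v⁻¹, ?_⟩, ⟨v, ?_⟩, ?_, ?_⟩ <;>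
    simp only [mul_assoc, Units.inv_mul_cancel_left] <;>
    simp only [← mul_assoc, hei]

theorem stmt_14_general (R : Type*) [Ring R] (n : ℕ) (hninv : IsUnit (n : R))
    (ω : R) (hωc : ω ∈ Set.center R) (hωn : ω ^ n = 1)
    (u : R) (hu : u ^ n = 1)
    (e : ℕ → R)
    (he : ∀ k, e k =
      Ring.inverse (n : R) * ∑ j ∈ Finset.range n, (Ring.inverse ω) ^ (k * j) * u ^ j)
    (v : Rˣ) (hv : (v : R) * u * (↑v⁻¹ : R) = Ring.inverse ω * u) :
    (∀ k < n, (v : R) * e k * (↑v⁻¹ : R) = e ((k + 1) % n)) ∧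
      CyclicallyEquivalent n e := by
  set w := Ring.inverse ω
  have hw : ∀ x, Commute w x := (Set.ringInverse_mem_center hωc).comm
  have hwn : w ^ n = 1 := by rw [Ring.inverse_pow, hωn, Ring.inverse_one]
  have he_geom : ∀ k, e k = Ring.inverse (n : R) * ∑ j ∈ range n, (w ^ k * u) ^ j :=
    fun k => by simp only [he, ((hw u).pow_left k).mul_pow, ← pow_mul]
  have hconj : ∀ k, v * (w ^ k * u) * ↑v⁻¹ = w ^ ((k + 1) % n) * u := fun k => by
    rw [← pow_eq_pow_mod _ hwn, mul_assoc, mul_assoc, ← mul_assoc (v : R) (w ^ k),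
      ← ((hw v).pow_left k).eq, mul_assoc, ← mul_assoc (v : R) u, hv, ← mul_assoc,
      ← pow_succ]
  have hpow : ∀ k, (w ^ k * u) ^ n = 1 := fun k => by
    rw [((hw u).pow_left k).mul_pow, ← pow_mul, mul_comm, pow_mul, hwn, one_pow, hu, one_mul]
  have hvconj : ∀ k, v * e k * ↑v⁻¹ = e ((k + 1) % n) := fun k => by
    rw [he_geom, Units.conj_inverse_mul_geom_sum, hconj, he_geom]
  have hidem : ∀ k, IsIdempotentElem (e k) := fun k => by
    rw [he_geom]
    exact isIdempotentElem_inverse_mul_geom_sum hninv (hpow k)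
  exact ⟨fun k _ => hvconj k,
    cyclicallyEquivalent_of_conj_eq v (fun i _ => hidem i) (fun i _ => hvconj i)⟩

theorem stmt_14 (R : Type*) [Ring R] (n : ℕ) (hn : 2 ≤ n) (hninv : IsUnit (n : R))
    (ω : R) (hωc : ω ∈ Set.center R) (hωu : IsUnit ω) (hωn : ω ^ n = 1)
    (hdiff : ∀ i j, i < n → j < n → i ≠ j → IsUnit (ω ^ i - ω ^ j))
    (u : R) (hu : u ^ n = 1)
    (e : ℕ → R)
    (he : ∀ k, e k =
      Ring.inverse (n : R) * ∑ j ∈ Finset.range n, (Ring.inverse ω) ^ (k * j) * u ^ j)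
    (v : Rˣ) (hv : (v : R) * u * (↑v⁻¹ : R) = Ring.inverse ω * u) :
    (∀ k < n, (v : R) * e k * (↑v⁻¹ : R) = e ((k + 1) % n)) ∧
      CyclicallyEquivalent n e :=
  stmt_14_general R n hninv ω hωc hωn u hu e he v hv
end

section
/- Let R be a unital ring in which 2 is invertible, and let u ∈ R satisfy u^2 = 1. Set e_0 = (1+u)/2 and e_1 = (1-u)/2. Then the following are equivalent: (1) there exist x ∈ e_0 R e_1 and y ∈ e_1 R e_0 with xy = e_0 and yx = e_1; (2) there exist x, y ∈ R with xy - yx = u and xy + yx = 1. -/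
/-!
Since `2` is invertible, `x * y - y * x = u` and `x * y + y * x = 1` say exactly that
`x * y = e₀` and `y * x = e₁`. For idempotents `e, f`, any such pair can be moved into the Peirce
corners: `x * y = e` and `y * x = f` give `e * x = x * f` and `f * y = y * e`, so `e * x * f` and
`f * y * e` satisfy the same relations.
-/

theorem Commute.ringInverse_left {M₀ : Type*} [MonoidWithZero M₀] {a b : M₀}
    (h : Commute a b) : Commute (Ring.inverse a) b := by
  by_cases ha : IsUnit a
  · obtain ⟨a, rfl⟩ := ha
    rw [Ring.inverse_unit]
    exact h.units_inv_left
  · rw [Ring.inverse_non_unit a ha]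
    exact Commute.zero_left b

theorem exists_peirce_mul_eq_iff {M : Type*} [Semigroup M] {e f : M}
    (he : IsIdempotentElem e) (hf : IsIdempotentElem f) :
    (∃ x y : M, (∃ r, x = e * r * f) ∧ (∃ r, y = f * r * e) ∧ x * y = e ∧ y * x = f) ↔
      ∃ x y : M, x * y = e ∧ y * x = f := by
  refine ⟨fun ⟨x, y, _, _, hxy, hyx⟩ ↦ ⟨x, y, hxy, hyx⟩, fun ⟨x, y, hxy, hyx⟩ ↦ ?_⟩
  have hex : e * x = x * f := by rw [← hxy, ← hyx, mul_assoc]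
  have hfy : f * y = y * e := by rw [← hxy, ← hyx, mul_assoc]
  have hx : e * x * f = e * x := by rw [hex, mul_assoc, hf.eq]
  have hy : f * y * e = f * y := by rw [hfy, mul_assoc, he.eq]
  refine ⟨e * x * f, f * y * e, ⟨x, rfl⟩, ⟨y, rfl⟩, ?_, ?_⟩
  · rw [hx, hy, hfy, mul_assoc, ← mul_assoc x, hxy, he.eq, he.eq]
  · rw [hx, hy, hex, mul_assoc, ← mul_assoc y, hyx, hf.eq, hf.eq]

section TwoInvertible

variable {R : Type*} [Ring R]

theorem isIdempotentElem_inverse_two_mul_one_add (h2 : IsUnit (2 : R)) {u : R} (hu : u ^ 2 = 1) :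
    IsIdempotentElem (Ring.inverse (2 : R) * (1 + u)) := by
  have hc : Commute (Ring.inverse (2 : R)) (1 + u) := (Commute.ofNat_left 2 _).ringInverse_left
  have hsq : (1 + u) * (1 + u) = 2 * (1 + u) := by
    calc (1 + u) * (1 + u) = u ^ 2 + 2 * u + 1 := by noncomm_ring
      _ = 2 * (1 + u) := by rw [hu]; noncomm_ring
  calc Ring.inverse 2 * (1 + u) * (Ring.inverse 2 * (1 + u))
      = Ring.inverse 2 * (Ring.inverse 2 * ((1 + u) * (1 + u))) := by
        rw [mul_assoc, ← mul_assoc (1 + u), ← hc.eq, mul_assoc]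
    _ = Ring.inverse 2 * (1 + u) := by
        rw [hsq, ← mul_assoc (Ring.inverse 2) 2, Ring.inverse_mul_cancel _ h2, one_mul]

theorem isIdempotentElem_inverse_two_mul_one_sub (h2 : IsUnit (2 : R)) {u : R} (hu : u ^ 2 = 1) :
    IsIdempotentElem (Ring.inverse (2 : R) * (1 - u)) := by
  rw [sub_eq_add_neg]
  exact isIdempotentElem_inverse_two_mul_one_add h2 (by rwa [neg_sq])

theorem sub_eq_and_add_eq_one_iff (h2 : IsUnit (2 : R)) (u p q : R) :
    p - q = u ∧ p + q = 1 ↔ p = Ring.inverse 2 * (1 + u) ∧ q = Ring.inverse 2 * (1 - u) := by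
  constructor
  · rintro ⟨rfl, hs⟩
    constructor <;>
    · rw [eq_comm, Ring.inverse_mul_eq_iff_eq_mul _ _ _ h2, ← hs]
      noncomm_ring
  · rintro ⟨rfl, rfl⟩
    rw [← mul_sub, ← mul_add, show 1 + u - (1 - u) = 2 * u by noncomm_ring,
      add_add_sub_cancel, one_add_one_eq_two, ← mul_assoc, Ring.inverse_mul_cancel _ h2, one_mul]
    exact ⟨rfl, rfl⟩

end TwoInvertible

theorem stmt_16 (R : Type*) [Ring R] (h2 : IsUnit (2 : R)) (u : R) (hu : u ^ 2 = 1)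
    (e0 e1 : R) (he0 : e0 = Ring.inverse (2 : R) * (1 + u))
    (he1 : e1 = Ring.inverse (2 : R) * (1 - u)) :
    (∃ x y : R, (∃ r, x = e0 * r * e1) ∧ (∃ r, y = e1 * r * e0) ∧
        x * y = e0 ∧ y * x = e1) ↔
      (∃ x y : R, x * y - y * x = u ∧ x * y + y * x = 1) := by
  subst he0 he1
  rw [exists_peirce_mul_eq_iff (isIdempotentElem_inverse_two_mul_one_add h2 hu)
    (isIdempotentElem_inverse_two_mul_one_sub h2 hu)]
  simp only [sub_eq_and_add_eq_one_iff h2]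
end
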